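/- Let G be a hole-free and paraglider-free graph and A an induced subgraph of G isomorphic to the complement of C6. If a vertex x outside A has at least one neighbor in A and the set of its neighbors in A is not a clique, then x is adjacent to all six vertices of A. -/
import Mathlib

open SimpleGraph

/-- `H` occurs as an induced subgraph of `G`. -/
def HasInducedCopy {V W : Type} (G : SimpleGraph V) (H : SimpleGraph W) : Prop :=
  Nonempty (H ↪g G)

/-- `G` has no induced chordless cycle with at least 5 vertices. -/
def HoleFree {V : Type} (G : SimpleGraph V) : Prop :=
  ∀ n : ℕ, 5 ≤ n → ¬ HasInducedCopy G (cycleGraph n)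

/-- the disjoint union of a `P₂` and a `P₃`. -/
def p2p3 : SimpleGraph (Fin 5) :=
  SimpleGraph.fromRel (fun i j => (i, j) ∈ ([(0,1),(2,3),(3,4)] : List (Fin 5 × Fin 5)))

/-- the paraglider: a diamond on `0,1,2,3` (missing edge `2-3`) plus vertex `4` seeing `2,3`. -/
def paraglider : SimpleGraph (Fin 5) :=
  SimpleGraph.fromRel
    (fun i j => (i, j) ∈ ([(0,1),(0,2),(0,3),(1,2),(1,3),(4,2),(4,3)] : List (Fin 5 × Fin 5)))

/-- the diamond `K₄ - e`. -/
def diamond : SimpleGraph (Fin 4) :=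
  SimpleGraph.fromRel
    (fun i j => (i, j) ∈ ([(0,1),(0,2),(0,3),(1,2),(1,3)] : List (Fin 4 × Fin 4)))

/-- three independent edges. -/
def threeK2 : SimpleGraph (Fin 6) :=
  SimpleGraph.fromRel (fun i j => (i, j) ∈ ([(0,1),(2,3),(4,5)] : List (Fin 6 × Fin 6)))

/-- the matched co-bipartite graph: two cliques of size `k` joined by a perfect matching. -/
def matchedCoBip (k : ℕ) : SimpleGraph (Fin k ⊕ Fin k) :=
  SimpleGraph.fromRel (fun x y =>
    (∃ i j, x = Sum.inl i ∧ y = Sum.inl j) ∨ (∃ i j, x = Sum.inr i ∧ y = Sum.inr j) ∨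
    (∃ i, x = Sum.inl i ∧ y = Sum.inr i))

/-- `G` has no induced hole and no induced antihole. -/
def WeaklyChordal {V : Type} (G : SimpleGraph V) : Prop :=
  ∀ n : ℕ, 5 ≤ n →
    ¬ HasInducedCopy G (cycleGraph n) ∧ ¬ HasInducedCopy G (cycleGraph n)ᶜ

/-- a clique `K` whose removal disconnects the graph. -/
def HasCliqueSeparator {V : Type} (G : SimpleGraph V) : Prop :=
  ∃ K : Set V, G.IsClique K ∧ ¬ (G.induce Kᶜ).Preconnected

/-- an atom: a connected graph with no clique separator. -/
def IsAtomGraph {V : Type} (G : SimpleGraph V) : Prop :=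
  G.Connected ∧ ¬ HasCliqueSeparator G

/- ---------------- auxiliary material ---------------- -/

/-- build an induced embedding from pointwise data -/
def mkEmb {V W : Type} (G : SimpleGraph V) (H : SimpleGraph W) (m : W → V)
    (hd : ∀ a b : W, a ≠ b → m a ≠ m b)
    (ha : ∀ a b : W, H.Adj a b → G.Adj (m a) (m b))
    (hn : ∀ a b : W, a ≠ b → ¬ H.Adj a b → ¬ G.Adj (m a) (m b)) : H ↪g G where
  toFun := m
  inj' a b hab := by by_contra hne; exact hd a b hne hab
  map_rel_iff' := by
    intro a b
    constructor
    · intro h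
      by_contra hH
      rcases eq_or_ne a b with rfl | hne
      · exact G.irrefl h
      · exact hn a b hne hH h
    · exact ha a b

instance : DecidableRel paraglider.Adj := fun a b => by
  unfold paraglider; rw [fromRel_adj]; infer_instance

lemma rot_aux : ∀ (k a b : Fin 6), (cycleGraph 6)ᶜ.Adj (a + k) (b + k) ↔ (cycleGraph 6)ᶜ.Adj a b := by
  decide

/-- rotation automorphism of the antihole -/
def rot6 (k : Fin 6) : (cycleGraph 6)ᶜ ≃g (cycleGraph 6)ᶜ where
  toEquiv := Equiv.addRight k
  map_rel_iff' := by intro a b; exact rot_aux k a b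

/-- reflection automorphism of the antihole -/
def refl6 : (cycleGraph 6)ᶜ ≃g (cycleGraph 6)ᶜ where
  toEquiv := ⟨fun i => 1 - i, fun i => 1 - i, by decide, by decide⟩
  map_rel_iff' := by intro a b; revert a b; decide

section Steps

variable {V : Type} {x : V}

lemma stepA (G : SimpleGraph V) (hHole : HoleFree G) (f : (cycleGraph 6)ᶜ ↪g G)
    (hx : x ∉ Set.range ⇑f)
    (h0 : G.Adj x (f 0)) (h1 : G.Adj x (f 1)) :
    G.Adj x (f 2) ∨ G.Adj x (f 5) := by
  by_contra hcon
  push_neg at hcon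
  obtain ⟨n2, n5⟩ := hcon
  have hA : ∀ i j : Fin 6, (cycleGraph 6)ᶜ.Adj i j → G.Adj (f i) (f j) :=
    fun i j h => f.map_rel_iff.mpr h
  have hN : ∀ i j : Fin 6, ¬ (cycleGraph 6)ᶜ.Adj i j → ¬ G.Adj (f i) (f j) :=
    fun i j h h' => h (f.map_rel_iff.mp h')
  have hcopy : HasInducedCopy G (cycleGraph 5) := by
    refine ⟨mkEmb G _ ![f 0, f 2, f 5, f 1, x] ?_ ?_ ?_⟩
    · intro a b hne
      fin_cases a <;> fin_cases b <;>
        first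
        | exact absurd rfl hne
        | exact fun h => absurd (f.injective h) (by decide)
        | exact fun h => hx ⟨_, h⟩
        | exact fun h => hx ⟨_, h.symm⟩
    · intro a b hab
      fin_cases a <;> fin_cases b <;>
        first
        | exact absurd hab (by decide)
        | exact hA _ _ (by decide)
        | exact h0.symm | exact h1.symm | exact h0 | exact h1
    · intro a b hne hab
      fin_cases a <;> fin_cases b <;>
        first
        | exact absurd rfl hne
        | exact absurd (by decide : (cycleGraph 5).Adj _ _) hab
        | exact hN _ _ (by decide)
        | exact n2 | exact n5
        | exact fun h => n2 h.symm | exact fun h => n5 h.symm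
  exact hHole 5 (by norm_num) hcopy

lemma stepPara (G : SimpleGraph V) (hPara : ¬ HasInducedCopy G paraglider)
    (f : (cycleGraph 6)ᶜ ↪g G) (hx : x ∉ Set.range ⇑f)
    (m : Fin 5 → V)
    (hd : ∀ a b : Fin 5, a ≠ b → m a ≠ m b)
    (ha : ∀ a b : Fin 5, paraglider.Adj a b → G.Adj (m a) (m b))
    (hn : ∀ a b : Fin 5, a ≠ b → ¬ paraglider.Adj a b → ¬ G.Adj (m a) (m b)) : False :=
  hPara ⟨mkEmb G _ m hd ha hn⟩

lemma key (G : SimpleGraph V) (hHole : HoleFree G) (hPara : ¬ HasInducedCopy G paraglider)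
    (f : (cycleGraph 6)ᶜ ↪g G) (hx : x ∉ Set.range ⇑f)
    (h0 : G.Adj x (f 0)) (h1 : G.Adj x (f 1)) (h2 : G.Adj x (f 2)) :
    ∀ i : Fin 6, G.Adj x (f i) := by
  have hA : ∀ i j : Fin 6, (cycleGraph 6)ᶜ.Adj i j → G.Adj (f i) (f j) :=
    fun i j h => f.map_rel_iff.mpr h
  have hN : ∀ i j : Fin 6, ¬ (cycleGraph 6)ᶜ.Adj i j → ¬ G.Adj (f i) (f j) :=
    fun i j h h' => h (f.map_rel_iff.mp h')
  have h4 : G.Adj x (f 4) := by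
    by_contra n4
    refine stepPara G hPara f hx ![f 0, f 2, f 4, x, f 1] ?_ ?_ ?_
    · intro a b hne
      fin_cases a <;> fin_cases b <;>
        first
        | exact absurd rfl hne
        | exact fun h => absurd (f.injective h) (by decide)
        | exact fun h => hx ⟨_, h⟩
        | exact fun h => hx ⟨_, h.symm⟩
    · intro a b hab
      fin_cases a <;> fin_cases b <;>
        first
        | exact absurd hab (by decide)
        | exact hA _ _ (by decide)
        | exact h0.symm | exact h1.symm | exact h2.symm
        | exact h0 | exact h1 | exact h2
    · intro a b hne hab
      fin_cases a <;> fin_cases b <;>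
        first
        | exact absurd rfl hne
        | exact absurd (by decide : paraglider.Adj _ _) hab
        | exact hN _ _ (by decide)
        | exact n4 | exact fun h => n4 h.symm
  have h3 : G.Adj x (f 3) := by
    by_contra n3
    refine stepPara G hPara f hx ![f 4, x, f 0, f 1, f 3] ?_ ?_ ?_
    · intro a b hne
      fin_cases a <;> fin_cases b <;>
        first
        | exact absurd rfl hne
        | exact fun h => absurd (f.injective h) (by decide)
        | exact fun h => hx ⟨_, h⟩
        | exact fun h => hx ⟨_, h.symm⟩
    · intro a b hab
      fin_cases a <;> fin_cases b <;>
        first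
        | exact absurd hab (by decide)
        | exact hA _ _ (by decide)
        | exact h0.symm | exact h1.symm | exact h4.symm
        | exact h0 | exact h1 | exact h4
    · intro a b hne hab
      fin_cases a <;> fin_cases b <;>
        first
        | exact absurd rfl hne
        | exact absurd (by decide : paraglider.Adj _ _) hab
        | exact hN _ _ (by decide)
        | exact n3 | exact fun h => n3 h.symm
  have h5 : G.Adj x (f 5) := by
    by_contra n5
    refine stepPara G hPara f hx ![f 0, x, f 2, f 3, f 5] ?_ ?_ ?_
    · intro a b hne
      fin_cases a <;> fin_cases b <;>
        first
        | exact absurd rfl hne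
        | exact fun h => absurd (f.injective h) (by decide)
        | exact fun h => hx ⟨_, h⟩
        | exact fun h => hx ⟨_, h.symm⟩
    · intro a b hab
      fin_cases a <;> fin_cases b <;>
        first
        | exact absurd hab (by decide)
        | exact hA _ _ (by decide)
        | exact h0.symm | exact h2.symm | exact h3.symm
        | exact h0 | exact h2 | exact h3
    · intro a b hne hab
      fin_cases a <;> fin_cases b <;>
        first
        | exact absurd rfl hne
        | exact absurd (by decide : paraglider.Adj _ _) hab
        | exact hN _ _ (by decide)
        | exact n5 | exact fun h => n5 h.symm
  intro i
  fin_cases i <;> assumption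

/-- if x sees two consecutive (in C6) vertices, it sees everything -/
lemma key2 (G : SimpleGraph V) (hHole : HoleFree G) (hPara : ¬ HasInducedCopy G paraglider)
    (f : (cycleGraph 6)ᶜ ↪g G) (hx : x ∉ Set.range ⇑f)
    (h0 : G.Adj x (f 0)) (h1 : G.Adj x (f 1)) :
    ∀ i : Fin 6, G.Adj x (f i) := by
  rcases stepA G hHole f hx h0 h1 with h2 | h5
  · exact key G hHole hPara f hx h0 h1 h2
  · -- use reflection: f' = f ∘ refl6, f' 0 = f 1, f' 1 = f 0, f' 2 = f 5
    set f' : (cycleGraph 6)ᶜ ↪g G := f.comp refl6.toEmbedding with hf'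
    have hx' : x ∉ Set.range ⇑f' := by
      intro ⟨i, hi⟩
      exact hx ⟨refl6 i, hi⟩
    have hall := key G hHole hPara f' hx' (by exact h1) (by exact h0) (by exact h5)
    intro i
    have := hall (refl6.symm i)
    have he : f' (refl6.symm i) = f i := by
      show f (refl6 (refl6.symm i)) = f i
      rw [RelIso.apply_symm_apply]
    rwa [he] at this

end Steps

/-- if `x` sees `A` and `N_A(x)` is not a clique then `x` sees all of `A`. -/
theorem nonclique_neighborhood_total {V : Type} (G : SimpleGraph V)
    (hHole : HoleFree G) (hPara : ¬ HasInducedCopy G paraglider)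
    (f : (cycleGraph 6)ᶜ ↪g G)
    (x : V) (hx : x ∉ Set.range ⇑f) (hsees : ∃ i : Fin 6, G.Adj x (f i))
    (hnc : ¬ G.IsClique (⇑f '' {i : Fin 6 | G.Adj x (f i)})) :
    ∀ i : Fin 6, G.Adj x (f i) := by
  classical
  -- extract two neighbors of x in A that are nonadjacent
  rw [SimpleGraph.isClique_iff, Set.Pairwise] at hnc
  push_neg at hnc
  obtain ⟨a, ha, b, hb, hab, hnadj⟩ := hnc
  obtain ⟨i, hi, rfl⟩ := ha
  obtain ⟨j, hj, rfl⟩ := hb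
  simp only [Set.mem_setOf_eq] at hi hj
  have hij : i ≠ j := fun h => hab (by rw [h])
  have hnA : ¬ (cycleGraph 6)ᶜ.Adj i j := fun h => hnadj (f.map_rel_iff.mpr h)
  have hC : (cycleGraph 6).Adj i j := by
    by_contra hc
    exact hnA ⟨hij, hc⟩
  rw [cycleGraph_adj] at hC
  -- WLOG j = i + 1 (else swap i and j)
  have main : ∀ (i : Fin 6), G.Adj x (f i) → G.Adj x (f (i+1)) → ∀ t : Fin 6, G.Adj x (f t) := by
    intro k hk hk1
    set f' : (cycleGraph 6)ᶜ ↪g G := f.comp (rot6 k).toEmbedding with hf'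
    have hx' : x ∉ Set.range ⇑f' := by
      intro ⟨t, ht⟩
      exact hx ⟨rot6 k t, ht⟩
    have e0 : f' 0 = f k := by show f ((0 : Fin 6) + k) = f k; rw [zero_add]
    have e1 : f' 1 = f (k + 1) := by show f ((1 : Fin 6) + k) = f (k+1); rw [add_comm]
    have hall := key2 G hHole hPara f' hx' (by rw [e0]; exact hk) (by rw [e1]; exact hk1)
    intro t
    have := hall (t - k)
    have he : f' (t - k) = f t := by show f (t - k + k) = f t; rw [sub_add_cancel]
    rwa [he] at this
  rcases hC with h | h
  · have hij' : i = j + 1 := by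
      have := sub_eq_iff_eq_add.mp h
      rwa [add_comm 1 _] at this
    exact main j hj (hij' ▸ hi)
  · have hji' : j = i + 1 := by
      have := sub_eq_iff_eq_add.mp h
      rwa [add_comm 1 _] at this
    exact main i hi (hji' ▸ hj)
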